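/- Assume ūB(0) > ūA(0) and ūA(1) > ūB(1). (i) If c ∈ (0,1] is such that ūB(y) > ūA(y) for all y ∈ (0, c), then every Carathéodory solution x of the continuous-time imitation population dynamics with x(0) in the interior of 𝒳_s and σ(x(0)) ∈ (0, c) satisfies x(t) → 0 (the zero vector) as t → ∞. (ii) If c ∈ [0,1) is such that ūA(y) > ūB(y) for all y ∈ (c, 1), then every Carathéodory solution x with x(0) in the interior of 𝒳_s and σ(x(0)) ∈ (c, 1) satisfies x(t) → ρ as t → ∞. -/

import Mathlib

/-!
On the open set of interior points of `𝒳_s` whose mass `σ` lies in `(0, c)` (resp. `(c, 1)`) the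
dynamics is single-valued, `ẋ = b - x` with `b = 0` (resp. `b = ρ`). Its explicit solution
`b + e^{-t} (x(0) - b)` never leaves that set: it moves along the segment from `x(0)` to the corner
`b` of the convex box `𝒳_s`, and its mass moves monotonically towards `σ(b)`, an endpoint of the
interval. As `y ↦ b - y` is Lipschitz, ODE uniqueness, propagated along `[0, ∞)` by an open–closed
argument, forces the Carathéodory solution to equal this trajectory, which converges to `b`.
-/

open scoped Classical
open MeasureTheory Filter Set

/-- The state space `ℝ^p`, with the Euclidean norm. -/
abbrev Vec (p : ℕ) := EuclideanSpace ℝ (Fin p)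

/-- Maximum of finitely many polynomial utilities at `y`. -/
noncomputable def ubar {p : ℕ} (u : Fin p → Polynomial ℝ) (y : ℝ) : ℝ :=
  ⨆ i, (u i).eval y

/-- The total proportion of `A`-players: `σ(x) = Σ_i x_i`. -/
noncomputable def sigma' {p : ℕ} (x : Vec p) : ℝ := ∑ i, x i

/-- The state space `𝒳_s = ∏_i [0, ρ_i]`. -/
def Xs {p : ℕ} (ρ : Vec p) : Set (Vec p) := {x | ∀ i, x i ∈ Set.Icc 0 (ρ i)}

/-- The set-valued map of the continuous-time imitation population dynamics. -/
noncomputable def Vmap {p : ℕ} (ρ : Vec p) (uA uB : Fin p → Polynomial ℝ)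
    (x : Vec p) : Set (Vec p) :=
  if x ∈ interior (Xs ρ) ∧ ubar uB (sigma' x) < ubar uA (sigma' x) then {ρ - x}
  else if x ∈ interior (Xs ρ) ∧ ubar uA (sigma' x) < ubar uB (sigma' x) then {-x}
  else segment ℝ (ρ - x) (-x)

/-- A Carathéodory solution of the continuous-time imitation population dynamics on `[0,∞)`:
a locally absolutely continuous `𝒳_s`-valued function whose derivative lies in `Vmap`
almost everywhere, expressed in integral form. -/
def IsPopSol {p : ℕ} (ρ : Vec p) (uA uB : Fin p → Polynomial ℝ) (x : ℝ → Vec p) : Prop :=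
  (∀ t, 0 ≤ t → x t ∈ Xs ρ) ∧
  ∃ v : ℝ → Vec p,
    (∀ᵐ t ∂(MeasureTheory.volume.restrict (Set.Ici (0:ℝ))), v t ∈ Vmap ρ uA uB (x t)) ∧
    (∀ t, 0 ≤ t → IntervalIntegrable v MeasureTheory.volume 0 t) ∧
    (∀ t, 0 ≤ t → x t = x 0 + ∫ s in (0:ℝ)..t, v s)

open Topology AffineMap

section IntegralSolution

variable {E : Type*} [NormedAddCommGroup E] [NormedSpace ℝ E] {x v : ℝ → E}

theorem eq_add_integral_of_le (hint : ∀ t, 0 ≤ t → IntervalIntegrable v volume 0 t)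
    (hx : ∀ t, 0 ≤ t → x t = x 0 + ∫ s in (0:ℝ)..t, v s) {a t : ℝ} (ha : 0 ≤ a) (hat : a ≤ t) :
    x t = x a + ∫ s in a..t, v s := by
  have hv : IntervalIntegrable v volume a t :=
    (hint t (ha.trans hat)).mono_set (by rw [uIcc_of_le hat, uIcc_of_le (ha.trans hat)]; gcongr)
  rw [hx t (ha.trans hat), hx a ha, add_assoc,
    intervalIntegral.integral_add_adjacent_intervals (hint a ha) hv]

theorem continuousOn_Icc_of_eq_integral (hint : ∀ t, 0 ≤ t → IntervalIntegrable v volume 0 t)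
    (hx : ∀ t, 0 ≤ t → x t = x 0 + ∫ s in (0:ℝ)..t, v s) {T : ℝ} (hT : 0 ≤ T) :
    ContinuousOn x (Icc 0 T) := by
  have hprim := intervalIntegral.continuousOn_primitive_interval' (hint T hT) left_mem_uIcc
  rw [uIcc_of_le hT] at hprim
  exact (continuousOn_const.add hprim).congr fun t ht => hx t ht.1

theorem hasDerivWithinAt_Ici_of_eq_integral [CompleteSpace E] {g : ℝ → E} {a b : ℝ}
    (hg : ContinuousOn g (Icc a b)) (hx : ∀ t ∈ Icc a b, x t = x a + ∫ s in a..t, g s)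
    {t : ℝ} (ht : t ∈ Ico a b) :
    HasDerivWithinAt x (g t) (Ici t) t := by
  have hmem : Icc a b ∈ 𝓝[Ici t] t :=
    mem_of_superset (Icc_mem_nhdsGE_of_mem ⟨le_rfl, ht.2⟩) (Icc_subset_Icc_left ht.1)
  have hmem' : Icc a b ∈ 𝓝[Ioi t] t := nhdsWithin_mono t Ioi_subset_Ici_self hmem
  have hF : HasDerivWithinAt (fun r => x a + ∫ s in a..r, g s) (g t) (Ici t) t :=
    (intervalIntegral.integral_hasDerivWithinAt_right
      ((hg.mono (Icc_subset_Icc_right ht.2.le)).intervalIntegrable_of_Icc ht.1)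
      ((hg.stronglyMeasurableAtFilter_nhdsWithin measurableSet_Icc t).filter_mono
        (nhdsWithin_le_of_mem hmem'))
      ((hg t (Ico_subset_Icc_self ht)).mono_of_mem_nhdsWithin hmem')).const_add _
  exact hF.congr_of_eventuallyEq (eventuallyEq_of_mem hmem hx) (hx t (Ico_subset_Icc_self ht))

variable [CompleteSpace E] {f : E → E} {K : NNReal} {U : Set E} {z : ℝ → E}

theorem eventually_eqOn_Icc_of_eq_integral (hf : LipschitzWith K f) (hU : IsOpen U)
    (hint : ∀ t, 0 ≤ t → IntervalIntegrable v volume 0 t)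
    (hx : ∀ t, 0 ≤ t → x t = x 0 + ∫ s in (0:ℝ)..t, v s)
    (hv : ∀ᵐ t ∂volume.restrict (Ici 0), x t ∈ U → v t = f (x t))
    (hz : ∀ t, HasDerivAt z (f (z t)) t) {t₀ : ℝ} (ht₀ : 0 ≤ t₀) (hxU : x t₀ ∈ U)
    (hxz : x t₀ = z t₀) :
    ∀ᶠ t₁ in 𝓝[>] t₀, EqOn x z (Icc t₀ t₁) := by
  have hxc : ContinuousOn x (Icc t₀ (t₀ + 1)) :=
    (continuousOn_Icc_of_eq_integral hint hx (by linarith)).mono (Icc_subset_Icc_left ht₀)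
  obtain ⟨u, hu, hsub⟩ := mem_nhdsGE_iff_exists_Icc_subset.1 <|
    inter_mem ((hxc t₀ (left_mem_Icc.2 (by linarith))).mono_of_mem_nhdsWithin
      (Icc_mem_nhdsGE (lt_add_one t₀)) (hU.mem_nhds hxU)) (Icc_mem_nhdsGE (lt_add_one t₀))
  filter_upwards [Ioo_mem_nhdsGT hu] with t₁ ht₁
  have hIcc : Icc t₀ t₁ ⊆ Icc t₀ u := Icc_subset_Icc_right ht₁.2.le
  have hxc₁ : ContinuousOn x (Icc t₀ t₁) := hxc.mono fun s hs => (hsub (hIcc hs)).2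
  have hv' : ∀ᵐ s, s ∈ Ici 0 → x s ∈ U → v s = f (x s) :=
    (ae_restrict_iff' measurableSet_Ici).1 hv
  have hint₁ : ∀ s ∈ Icc t₀ t₁, x s = x t₀ + ∫ u in t₀..s, f (x u) := by
    intro s hs
    rw [eq_add_integral_of_le hint hx ht₀ hs.1]
    congr 1
    refine intervalIntegral.integral_congr_ae ?_
    filter_upwards [hv'] with r hr hrs
    rw [uIoc_of_le hs.1] at hrs
    exact hr (ht₀.trans hrs.1.le) (hsub (hIcc ⟨hrs.1.le, hrs.2.trans hs.2⟩)).1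
  exact ODE_solution_unique (v := fun _ => f) (fun _ => hf) hxc₁
    (fun s hs => hasDerivWithinAt_Ici_of_eq_integral (hf.continuous.comp_continuousOn hxc₁)
      hint₁ hs)
    (fun s _ => (hz s).continuousAt.continuousWithinAt) (fun s _ => (hz s).hasDerivWithinAt) hxz

theorem eqOn_Ici_of_eq_integral (hf : LipschitzWith K f) (hU : IsOpen U)
    (hint : ∀ t, 0 ≤ t → IntervalIntegrable v volume 0 t)
    (hx : ∀ t, 0 ≤ t → x t = x 0 + ∫ s in (0:ℝ)..t, v s)
    (hv : ∀ᵐ t ∂volume.restrict (Ici 0), x t ∈ U → v t = f (x t))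
    (hz : ∀ t, HasDerivAt z (f (z t)) t) (hzU : ∀ t, 0 ≤ t → z t ∈ U) (h0 : x 0 = z 0) :
    EqOn x z (Ici 0) := by
  intro T (hT : 0 ≤ T)
  have hclosed : IsClosed ({t | x t = z t} ∩ Icc 0 T) := by
    have := ((continuousOn_Icc_of_eq_integral hint hx hT).sub
      (fun s _ => (hz s).continuousAt.continuousWithinAt)).preimage_isClosed_of_isClosed
      isClosed_Icc (isClosed_singleton (x := (0 : E)))
    simpa only [inter_comm, preimage, mem_singleton_iff, Pi.sub_apply, sub_eq_zero] using this
  refine hclosed.Icc_subset_of_forall_exists_gt h0 ?_ (right_mem_Icc.2 hT)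
  rintro t₀ ⟨hxz, ht₀, -⟩ y hy
  have hxU : x t₀ ∈ U := hxz ▸ hzU t₀ ht₀
  obtain ⟨t₁, hEq, ht₁⟩ := ((eventually_eqOn_Icc_of_eq_integral hf hU hint hx hv hz ht₀ hxU
    hxz).and (Ioc_mem_nhdsGT hy)).exists
  exact ⟨t₁, hEq (right_mem_Icc.2 ht₁.1.le), ht₁⟩

end IntegralSolution

theorem Convex.lineMap_mem_interior {E : Type*} [AddCommGroup E] [Module ℝ E] [TopologicalSpace E]
    [IsTopologicalAddGroup E] [ContinuousConstSMul ℝ E] {s : Set E} (hs : Convex ℝ s)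
    {b y : E} (hb : b ∈ closure s) (hy : y ∈ interior s) {e : ℝ} (he : e ∈ Ioc 0 1) :
    lineMap b y e ∈ interior s := by
  rw [lineMap_apply_module]
  exact hs.combo_closure_interior_mem_interior hb hy (sub_nonneg.2 he.2) he.1 (by ring)

section Population

variable {p : ℕ} {ρ : Vec p} {uA uB : Fin p → Polynomial ℝ}

theorem convex_Xs : Convex ℝ (Xs ρ) := fun y hy w hw a b ha hb hab i => by
  simpa using convex_Icc 0 (ρ i) (hy i) (hw i) ha hb hab

theorem continuous_sigma' : Continuous (sigma' : Vec p → ℝ) :=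
  continuous_finsetSum _ fun i _ => (EuclideanSpace.proj i).continuous

theorem sigma'_lineMap (b y : Vec p) (e : ℝ) :
    sigma' (lineMap b y e) = lineMap (sigma' b) (sigma' y) e := by
  simp only [sigma', lineMap_apply_module, PiLp.add_apply, PiLp.smul_apply, smul_eq_mul,
    Finset.sum_add_distrib, Finset.mul_sum]

theorem Vmap_eq_rho_sub_of_ubar_lt {y : Vec p} (hy : y ∈ interior (Xs ρ))
    (h : ubar uB (sigma' y) < ubar uA (sigma' y)) : Vmap ρ uA uB y = {ρ - y} :=
  if_pos ⟨hy, h⟩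

-- Stated with `0 - y` rather than `-y`, to be an instance of `Vmap ρ uA uB y = {b - y}`.
theorem Vmap_eq_zero_sub_of_ubar_lt {y : Vec p} (hy : y ∈ interior (Xs ρ))
    (h : ubar uA (sigma' y) < ubar uB (sigma' y)) : Vmap ρ uA uB y = {0 - y} := by
  rw [Vmap, if_neg fun h' => h.not_gt h'.2, if_pos ⟨hy, h⟩, zero_sub]

theorem IsPopSol.tendsto_of_Vmap_eq {x : ℝ → Vec p} (hsol : IsPopSol ρ uA uB x) {b : Vec p}
    (hb : b ∈ Xs ρ) {l r : ℝ} (hbσ : sigma' b ∈ Icc l r)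
    (hV : ∀ y ∈ interior (Xs ρ), sigma' y ∈ Ioo l r → Vmap ρ uA uB y = {b - y})
    (hx₀ : x 0 ∈ interior (Xs ρ)) (hσ₀ : sigma' (x 0) ∈ Ioo l r) :
    Tendsto x atTop (𝓝 b) := by
  obtain ⟨-, v, hv, hint, hx⟩ := hsol
  set U := interior (Xs ρ) ∩ sigma' ⁻¹' Ioo l r
  set z : ℝ → Vec p := fun t => Real.exp (-t) • (x 0 - b) + b
  have hz : ∀ t, HasDerivAt z (b - z t) t := fun t =>
    (((hasDerivAt_neg t).exp.smul_const (x 0 - b)).add_const b).congr_deriv (by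
      simp [z, neg_smul])
  have hzU : ∀ t, 0 ≤ t → z t ∈ U := fun t ht => by
    have he : Real.exp (-t) ∈ Ioc 0 1 := ⟨Real.exp_pos _, Real.exp_le_one_iff.2 (by linarith)⟩
    rw [show z t = lineMap b (x 0) (Real.exp (-t)) from (lineMap_apply_module' _ _ _).symm]
    refine ⟨convex_Xs.lineMap_mem_interior (subset_closure hb) hx₀ he, ?_⟩
    rw [mem_preimage, sigma'_lineMap, ← interior_Icc]
    exact (convex_Icc l r).lineMap_mem_interior (subset_closure hbσ) (by rwa [interior_Icc]) he
  have hU : IsOpen U := isOpen_interior.inter (isOpen_Ioo.preimage continuous_sigma')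
  have hxz : EqOn x z (Ici 0) :=
    eqOn_Ici_of_eq_integral (IsometryEquiv.subLeft b).isometry.lipschitz hU hint hx
      (hv.mono fun t ht hxU => by simpa [hV _ hxU.1 hxU.2] using ht) hz hzU (by simp [z])
  have hzb : Tendsto z atTop (𝓝 b) := by
    simpa using (Real.tendsto_exp_neg_atTop_nhds_zero.smul_const (x 0 - b)).add_const b
  exact hzb.congr' <| (eventually_ge_atTop 0).mono fun t ht => (hxz ht).symm

end Population

theorem population_convergence_to_extremes_general
    {p : ℕ} (ρ : Vec p) (hρ : ∀ i, 0 < ρ i) (hsum : ∑ i, ρ i = 1)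
    (uA uB : Fin p → Polynomial ℝ) :
    (∀ c : ℝ, c ∈ Set.Ioc (0:ℝ) 1 →
      (∀ y ∈ Set.Ioo (0:ℝ) c, ubar uA y < ubar uB y) →
      ∀ x : ℝ → Vec p, IsPopSol ρ uA uB x → x 0 ∈ interior (Xs ρ) →
        sigma' (x 0) ∈ Set.Ioo (0:ℝ) c →
        Filter.Tendsto x Filter.atTop (nhds (0 : Vec p))) ∧
    (∀ c : ℝ, c ∈ Set.Ico (0:ℝ) 1 →
      (∀ y ∈ Set.Ioo c 1, ubar uB y < ubar uA y) →
      ∀ x : ℝ → Vec p, IsPopSol ρ uA uB x → x 0 ∈ interior (Xs ρ) →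
        sigma' (x 0) ∈ Set.Ioo c 1 →
        Filter.Tendsto x Filter.atTop (nhds ρ)) := by
  refine ⟨fun c hc hAB x hsol hx₀ hσ₀ => ?_, fun c hc hAB x hsol hx₀ hσ₀ => ?_⟩
  · have hσ : sigma' (0 : Vec p) ∈ Icc 0 c := by simpa [sigma'] using hc.1.le
    exact hsol.tendsto_of_Vmap_eq (fun i => ⟨le_rfl, (hρ i).le⟩) hσ
      (fun y hy hσy => Vmap_eq_zero_sub_of_ubar_lt hy (hAB _ hσy)) hx₀ hσ₀
  · have hσ : sigma' ρ ∈ Icc c 1 := by rw [sigma', hsum]; exact ⟨hc.2.le, le_rfl⟩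
    exact hsol.tendsto_of_Vmap_eq (fun i => ⟨(hρ i).le, le_rfl⟩) hσ
      (fun y hy hσy => Vmap_eq_rho_sub_of_ubar_lt hy (hAB _ hσy)) hx₀ hσ₀

theorem population_convergence_to_extremes
    {p : ℕ} (hp : 0 < p) (ρ : Vec p) (hρ : ∀ i, 0 < ρ i) (hsum : ∑ i, ρ i = 1)
    (uA uB : Fin p → Polynomial ℝ)
    (h0 : ubar uA 0 < ubar uB 0) (h1 : ubar uB 1 < ubar uA 1) :
    (∀ c : ℝ, c ∈ Set.Ioc (0:ℝ) 1 →
      (∀ y ∈ Set.Ioo (0:ℝ) c, ubar uA y < ubar uB y) →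
      ∀ x : ℝ → Vec p, IsPopSol ρ uA uB x → x 0 ∈ interior (Xs ρ) →
        sigma' (x 0) ∈ Set.Ioo (0:ℝ) c →
        Filter.Tendsto x Filter.atTop (nhds (0 : Vec p))) ∧
    (∀ c : ℝ, c ∈ Set.Ico (0:ℝ) 1 →
      (∀ y ∈ Set.Ioo c 1, ubar uB y < ubar uA y) →
      ∀ x : ℝ → Vec p, IsPopSol ρ uA uB x → x 0 ∈ interior (Xs ρ) →
        sigma' (x 0) ∈ Set.Ioo c 1 →
        Filter.Tendsto x Filter.atTop (nhds ρ)) :=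
  population_convergence_to_extremes_general ρ hρ hsum uA uB
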